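/- Let d, e, ε, g be integers with e ≥ 2, d ≥ e+4, 0 ≤ ε ≤ e-1, and g ≥ 0. Suppose 2ge ≤ (d-1-ε)·(d+ε-e-1) and (d-e-3)·d ≤ 2g-2. Then e = 2, d = 6, and g = 4. -/
import Mathlib


theorem next_extremal_case_classification
    (d e ε g : ℤ) (he : e ≥ 2) (hd : d ≥ e + 4) (hε0 : 0 ≤ ε) (hε1 : ε ≤ e - 1)
    (hg0 : g ≥ 0)
    (hcast : 2 * g * e ≤ (d - 1 - ε) * (d + ε - e - 1))
    (hcoh : (d - e - 3) * d ≤ 2 * g - 2) :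
    e = 2 ∧ d = 6 ∧ g = 4 := by
  have hK : e * ((d - e - 3) * d + 2) ≤ (d - 1 - ε) * (d + ε - e - 1) := by
    nlinarith [mul_le_mul_of_nonneg_left hcoh (by linarith : (0:ℤ) ≤ e)]
  have hsq : 4 * ((d - 1 - ε) * (d + ε - e - 1)) ≤ (2*d - e - 2)^2 := by
    nlinarith [sq_nonneg (2*ε - e)]
  have he2 : e = 2 := by
    by_contra h
    have he3 : e ≥ 3 := by omega
    nlinarith [mul_nonneg (sub_nonneg.2 (by linarith : (3:ℤ) ≤ e)) (sub_nonneg.2 (by linarith : e + 4 ≤ d)),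
      mul_nonneg (sub_nonneg.2 (by linarith : e + 4 ≤ d)) (sub_nonneg.2 (by linarith : e + 4 ≤ d)),
      sq_nonneg (d - e - 4), mul_nonneg (mul_nonneg (by linarith : (0:ℤ) ≤ e - 3) (by linarith : (0:ℤ) ≤ d - e - 4)) (by linarith : (0:ℤ) ≤ d - e - 4),
      mul_nonneg (by linarith : (0:ℤ) ≤ e - 3) (sq_nonneg (d - e - 4))]
  subst he2
  have hd6 : d = 6 := by nlinarith [sq_nonneg (ε - 1)]
  subst hd6
  refine ⟨rfl, rfl, ?_⟩
  nlinarith [sq_nonneg (ε - 1)]
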